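/- arXiv:1805.02974 — 3 statements merged into one kernel-verified Lean document; each statement's English description precedes it below -/
import Mathlib

section
/- Let W_r be the random walk matrix of the replacement product and suppose W_r³ = d̄·W_z + (1−d̄)·C where d̄ = d²/(d+1)³, ‖C‖ ≤ 1, and μ₂(W_z) ≤ 1 − λ_G·λ_H². Then μ₂(W_r³) ≤ 1 − d̄·λ_G·λ_H², and consequently 1 − μ₂(W_r) ≥ 1 − (1 − d̄·λ_G·λ_H²)^{1/3} ≥ (1/6)·d̄·λ_G·λ_H². -/
/-- The second largest eigenvalue of a symmetric doubly-stochastic matrix with top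
eigenvector `𝟙`, via its variational characterization: the supremum of `‖M·x‖₂` over
unit vectors `x` orthogonal to `𝟙`. -/
noncomputable def mu2 {N : ℕ} (M : Matrix (Fin N) (Fin N) ℝ) : ℝ :=
  sSup {r : ℝ | ∃ x : Fin N → ℝ, ∑ i, x i ^ 2 = 1 ∧ ∑ i, x i = 0 ∧
    r = Real.sqrt (∑ i, (M.mulVec x i) ^ 2)}

/-! Splitting `W_r³ = d̄ W_z + (1 - d̄) C` and using `‖C‖ ≤ 1`, the triangle inequality gives
`μ₂(W_r³) ≤ d̄ μ₂(W_z) + 1 - d̄`. For a symmetric operator `T`, Cauchy–Schwarz gives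
`‖Tx‖² = ⟪x, T²x⟫ ≤ ‖x‖ ‖T²x‖` and `‖T²x‖² ≤ ‖Tx‖ ‖T³x‖`, hence `‖Tx‖³ ≤ ‖x‖² ‖T³x‖` and
`μ₂(W_r)³ ≤ μ₂(W_r³)`. Finally Bernoulli's inequality `(1 - s/3)³ ≥ 1 - s` bounds the cube root. -/

open WithLp Matrix

theorem LinearMap.IsSymmetric.norm_apply_sq_le {E : Type*} [NormedAddCommGroup E]
    [InnerProductSpace ℝ E] {T : E →ₗ[ℝ] E} (hT : T.IsSymmetric) (x : E) :
    ‖T x‖ ^ 2 ≤ ‖x‖ * ‖T (T x)‖ := by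
  rw [← real_inner_self_eq_norm_sq, hT]
  exact real_inner_le_norm _ _

theorem LinearMap.IsSymmetric.norm_apply_pow_three_le {E : Type*} [NormedAddCommGroup E]
    [InnerProductSpace ℝ E] {T : E →ₗ[ℝ] E} (hT : T.IsSymmetric) (x : E) :
    ‖T x‖ ^ 3 ≤ ‖x‖ ^ 2 * ‖T (T (T x))‖ := by
  rcases (norm_nonneg (T x)).eq_or_lt with h0 | hpos
  · rw [← h0, zero_pow three_ne_zero]; positivity
  have h4 : ‖T x‖ ^ 4 ≤ ‖x‖ ^ 2 * (‖T x‖ * ‖T (T (T x))‖) :=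
    calc ‖T x‖ ^ 4 = (‖T x‖ ^ 2) ^ 2 := by ring
      _ ≤ (‖x‖ * ‖T (T x)‖) ^ 2 := by gcongr; exact hT.norm_apply_sq_le x
      _ = ‖x‖ ^ 2 * ‖T (T x)‖ ^ 2 := by ring
      _ ≤ ‖x‖ ^ 2 * (‖T x‖ * ‖T (T (T x))‖) := by gcongr; exact hT.norm_apply_sq_le (T x)
  nlinarith

theorem one_sub_rpow_inv_natCast_le {s : ℝ} {n : ℕ} (hn : n ≠ 0) (hs : s ≤ 1) :
    (1 - s) ^ (n⁻¹ : ℝ) ≤ 1 - s / n := by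
  have hn1 : (1 : ℝ) ≤ n := by exact_mod_cast Nat.one_le_iff_ne_zero.2 hn
  have hsn : s / n ≤ 1 := (div_le_one₀ (by positivity)).2 (hs.trans hn1)
  rw [Real.rpow_inv_le_iff_of_pos (by linarith) (by linarith) (by positivity), Real.rpow_natCast]
  calc 1 - s = 1 + n * (-(s / n)) := by field_simp; ring
    _ ≤ (1 + -(s / n)) ^ n := one_add_mul_le_pow (by linarith) n
    _ = (1 - s / n) ^ n := by ring

theorem sqrt_sum_sq_eq_norm_toLp {ι : Type*} [Fintype ι] (x : ι → ℝ) :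
    √(∑ i, x i ^ 2) = ‖toLp 2 x‖ := by
  simp [EuclideanSpace.norm_eq]

theorem norm_toLp_eq_one {ι : Type*} [Fintype ι] {x : ι → ℝ} (hx : ∑ i, x i ^ 2 = 1) :
    ‖toLp 2 x‖ = 1 := by
  rw [← sqrt_sum_sq_eq_norm_toLp, hx, Real.sqrt_one]

section mu2

variable {N : ℕ}

theorem bddAbove_mu2 (M : Matrix (Fin N) (Fin N) ℝ) :
    BddAbove {r : ℝ | ∃ x : Fin N → ℝ, ∑ i, x i ^ 2 = 1 ∧ ∑ i, x i = 0 ∧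
      r = Real.sqrt (∑ i, (M.mulVec x i) ^ 2)} := by
  refine ⟨‖toEuclideanCLM (𝕜 := ℝ) M‖, ?_⟩
  rintro r ⟨x, hx1, -, rfl⟩
  simpa [sqrt_sum_sq_eq_norm_toLp, norm_toLp_eq_one hx1] using
    (toEuclideanCLM (𝕜 := ℝ) M).le_opNorm (toLp 2 x)

theorem norm_mulVec_le_mu2 (M : Matrix (Fin N) (Fin N) ℝ) {x : Fin N → ℝ}
    (hx1 : ∑ i, x i ^ 2 = 1) (hx0 : ∑ i, x i = 0) : ‖toLp 2 (M *ᵥ x)‖ ≤ mu2 M := by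
  rw [← sqrt_sum_sq_eq_norm_toLp]
  exact le_csSup (bddAbove_mu2 M) ⟨x, hx1, hx0, rfl⟩

/-- `0 ≤ b` is needed: for `N ≤ 1` the set is empty and `mu2 M = sSup ∅ = 0`. -/
theorem mu2_le {M : Matrix (Fin N) (Fin N) ℝ} {b : ℝ} (hb : 0 ≤ b)
    (h : ∀ x : Fin N → ℝ, ∑ i, x i ^ 2 = 1 → ∑ i, x i = 0 → ‖toLp 2 (M *ᵥ x)‖ ≤ b) :
    mu2 M ≤ b := by
  refine Real.sSup_le ?_ hb
  rintro r ⟨x, hx1, hx0, rfl⟩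
  rw [sqrt_sum_sq_eq_norm_toLp]
  exact h x hx1 hx0

theorem mu2_nonneg (M : Matrix (Fin N) (Fin N) ℝ) : 0 ≤ mu2 M :=
  Real.sSup_nonneg (by rintro r ⟨x, -, -, rfl⟩; exact Real.sqrt_nonneg _)

theorem mu2_smul_add_smul_le {A B : Matrix (Fin N) (Fin N) ℝ} {a b : ℝ} (ha : 0 ≤ a)
    (hb : 0 ≤ b) (hB : ∀ x, ‖toLp 2 (B *ᵥ x)‖ ≤ ‖toLp 2 x‖) :
    mu2 (a • A + b • B) ≤ a * mu2 A + b := by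
  refine mu2_le (by have := mu2_nonneg A; positivity) fun x hx1 hx0 => ?_
  calc ‖toLp 2 ((a • A + b • B) *ᵥ x)‖ = ‖a • toLp 2 (A *ᵥ x) + b • toLp 2 (B *ᵥ x)‖ := by
        rw [add_mulVec, smul_mulVec, smul_mulVec]; rfl
    _ ≤ a * ‖toLp 2 (A *ᵥ x)‖ + b * ‖toLp 2 (B *ᵥ x)‖ := by
        grw [norm_add_le, norm_smul, norm_smul, Real.norm_of_nonneg ha, Real.norm_of_nonneg hb]
    _ ≤ a * mu2 A + b * 1 := by
        gcongr
        · exact norm_mulVec_le_mu2 A hx1 hx0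
        · exact norm_toLp_eq_one hx1 ▸ hB x
    _ = a * mu2 A + b := by ring

theorem mu2_pow_three_le {M : Matrix (Fin N) (Fin N) ℝ} (hM : M.IsHermitian) :
    mu2 M ^ 3 ≤ mu2 (M ^ 3) := by
  have hT := isSymmetric_toEuclideanLin_iff.mpr hM
  set m := mu2 (M ^ 3)
  have hm : 0 ≤ m := mu2_nonneg _
  suffices mu2 M ≤ m ^ (3⁻¹ : ℝ) by
    calc mu2 M ^ 3 ≤ (m ^ (3⁻¹ : ℝ)) ^ 3 := by gcongr; exact mu2_nonneg M
      _ = m := by exact_mod_cast Real.rpow_inv_natCast_pow hm (n := 3) (by norm_num)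
  refine mu2_le (by positivity) fun x hx1 hx0 => ?_
  rw [Real.le_rpow_inv_iff_of_pos (norm_nonneg _) hm (by norm_num), Real.rpow_ofNat]
  have := hT.norm_apply_pow_three_le (toLp 2 x)
  simp only [toLpLin_toLp, toLin'_apply, norm_toLp_eq_one hx1, one_pow, one_mul,
    mulVec_mulVec] at this
  rw [← pow_two, ← pow_succ'] at this
  exact this.trans (norm_mulVec_le_mu2 _ hx1 hx0)

end mu2

theorem replacement_product_spectral_gap_general {N : ℕ} (d : ℕ)
    (lamG lamH : ℝ) (hG : lamG ∈ Set.Ioo (0 : ℝ) 1) (hH : lamH ∈ Set.Ioo (0 : ℝ) 1)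
    (Wr Wz C : Matrix (Fin N) (Fin N) ℝ)
    (hWr : Wr.IsHermitian)
    (dbar : ℝ) (hdbar : dbar = (d : ℝ) ^ 2 / ((d : ℝ) + 1) ^ 3)
    (hdecomp : Wr ^ 3 = dbar • Wz + (1 - dbar) • C)
    (hC : ∀ x : Fin N → ℝ,
      Real.sqrt (∑ i, (C.mulVec x i) ^ 2) ≤ Real.sqrt (∑ i, x i ^ 2))
    (hmuz : mu2 Wz ≤ 1 - lamG * lamH ^ 2) :
    mu2 (Wr ^ 3) ≤ 1 - dbar * lamG * lamH ^ 2 ∧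
    1 - mu2 Wr ≥ 1 - (1 - dbar * lamG * lamH ^ 2) ^ ((1 : ℝ) / 3) ∧
    1 - (1 - dbar * lamG * lamH ^ 2) ^ ((1 : ℝ) / 3) ≥
      (1 / 6) * dbar * lamG * lamH ^ 2 := by
  have hdbar0 : 0 ≤ dbar := hdbar ▸ by positivity
  have hdbar1 : dbar ≤ 1 := by
    rw [hdbar, div_le_one (by positivity)]
    nlinarith [d.cast_nonneg (α := ℝ)]
  have hgap0 : 0 ≤ lamG * lamH ^ 2 := mul_nonneg hG.1.le (sq_nonneg _)
  have hgap1 : lamG * lamH ^ 2 ≤ 1 :=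
    mul_le_one₀ hG.2.le (sq_nonneg _) (pow_le_one₀ hH.1.le hH.2.le)
  have hs0 : 0 ≤ dbar * lamG * lamH ^ 2 := by rw [mul_assoc]; positivity
  have hs1 : dbar * lamG * lamH ^ 2 ≤ 1 := by
    rw [mul_assoc]; exact mul_le_one₀ hdbar1 hgap0 hgap1
  have hcube : mu2 (Wr ^ 3) ≤ 1 - dbar * lamG * lamH ^ 2 := by
    rw [hdecomp]
    refine (mu2_smul_add_smul_le hdbar0 (sub_nonneg.2 hdbar1) fun x => ?_).trans ?_
    · simpa only [sqrt_sum_sq_eq_norm_toLp] using hC x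
    · nlinarith
  refine ⟨hcube, ?_, ?_⟩
  · have : mu2 Wr ≤ (1 - dbar * lamG * lamH ^ 2) ^ ((1 : ℝ) / 3) := by
      rw [one_div, Real.le_rpow_inv_iff_of_pos (mu2_nonneg _) (by linarith) three_pos,
        Real.rpow_ofNat]
      exact (mu2_pow_three_le hWr).trans hcube
    linarith
  · have := one_sub_rpow_inv_natCast_le three_ne_zero hs1
    norm_num at this
    linarith

/-- If `W_r³ = d̄·W_z + (1−d̄)·C` with `d̄ = d²/(d+1)³`, `‖C‖ ≤ 1` and
`μ₂(W_z) ≤ 1 − λ_G·λ_H²`, then `μ₂(W_r³) ≤ 1 − d̄·λ_G·λ_H²`, and consequently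
`1 − μ₂(W_r) ≥ 1 − (1 − d̄·λ_G·λ_H²)^{1/3} ≥ (1/6)·d̄·λ_G·λ_H²`. -/
theorem replacement_product_spectral_gap {N : ℕ} (d : ℕ) (hd : 1 ≤ d)
    (lamG lamH : ℝ) (hG : lamG ∈ Set.Ioo (0 : ℝ) 1) (hH : lamH ∈ Set.Ioo (0 : ℝ) 1)
    (Wr Wz C : Matrix (Fin N) (Fin N) ℝ)
    (hWr : Wr.IsHermitian) (hWz : Wz.IsHermitian)
    (hWr1 : Wr.mulVec (fun _ => 1) = fun _ => 1)
    (hWz1 : Wz.mulVec (fun _ => 1) = fun _ => 1)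
    (dbar : ℝ) (hdbar : dbar = (d : ℝ) ^ 2 / ((d : ℝ) + 1) ^ 3)
    (hdecomp : Wr ^ 3 = dbar • Wz + (1 - dbar) • C)
    (hC : ∀ x : Fin N → ℝ,
      Real.sqrt (∑ i, (C.mulVec x i) ^ 2) ≤ Real.sqrt (∑ i, x i ^ 2))
    (hmuz : mu2 Wz ≤ 1 - lamG * lamH ^ 2) :
    mu2 (Wr ^ 3) ≤ 1 - dbar * lamG * lamH ^ 2 ∧
    1 - mu2 Wr ≥ 1 - (1 - dbar * lamG * lamH ^ 2) ^ ((1 : ℝ) / 3) ∧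
    1 - (1 - dbar * lamG * lamH ^ 2) ^ ((1 : ℝ) / 3) ≥
      (1 / 6) * dbar * lamG * lamH ^ 2 :=
  replacement_product_spectral_gap_general d lamG lamH hG hH Wr Wz C hWr dbar hdbar hdecomp hC hmuz
end

section
/- In a uniformly sampled layered subgraph 𝒢_S (where each vertex of 𝒢(G,t) independently keeps exactly one uniformly random outgoing edge), for any vertex α ∈ 𝒱₁*, the expected number of paths starting from other vertices of 𝒱₁* that intersect the unique path P_α at some layer is at most 1/2; hence with probability at least 1/2, P_α is vertex-disjoint from all paths P_β with β ≠ α ∈ 𝒱₁*. -/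
/-- The unique path, started at `start` in the first layer, in a sampled layered
subgraph: `σ v i j` gives the (vertex, copy) endpoint of the single retained outgoing
edge of the `i`-th copy of vertex `v` in layer `j`. -/
def layeredWalk {n t : ℕ} (ht : 0 < t)
    (σ : Fin n → Fin (2 * t) → Fin t → Fin n × Fin (2 * t))
    (start : Fin n × Fin (2 * t)) : ℕ → Fin n × Fin (2 * t)
  | 0 => start
  | k + 1 =>
      σ (layeredWalk ht σ start k).1 (layeredWalk ht σ start k).2
        ⟨k % t, Nat.mod_lt _ ht⟩

/-- Sampled layered subgraphs of the layered graph of `G`: each vertex keeps exactly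
one outgoing edge, recorded by `σ`, whose head must be a copy of a `G`-neighbor. -/
abbrev SampledLayered {n : ℕ} (G : SimpleGraph (Fin n)) [DecidableRel G.Adj] (t : ℕ) :=
  {σ : Fin n → Fin (2 * t) → Fin t → Fin n × Fin (2 * t) //
    ∀ v i j, G.Adj v (σ v i j).1}

/-!
Probabilities are kept as counts: `#{σ | E σ}` is `|Ω| · Pr[E]` for the uniform sample space
`Ω = SampledLayered G t`, in which the `Δ * (2 * t)` choices at each coordinate are independent.

Two walks that have not met by step `k` read distinct coordinates of `σ` at step `k`, so their
next steps are independent. Let `A_k(a, q)` be the expected number of walks from the other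
first-layer vertices that at step `k` are off the walk of `u`, which sits at `q`, on a vertex
adjacent to `a` (`apartWeight`). Initially `A_0(a, q) ≤ Δ · Pr[u at q]`, and since every vertex of
the layered graph has `Δ * (2 * t)` in- and out-neighbours, one step of both walks preserves
`A_k(a, q) ≤ Δ · Pr[u at q at step k]`. Hence the expected number of walks meeting the walk of
`u` for the first time at step `k + 1` is at most `Δ / (Δ * (2 * t)) = 1 / (2 * t)`; summing over
the `t` steps gives `1 / 2`, and Markov's inequality gives the probability bound.
-/

open Finset

theorem card_eq_sum_card_filter_and {α β : Type*} [Fintype α] [Fintype β] [DecidableEq β]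
    (P : α → Prop) [DecidablePred P] (f : α → β) :
    #{x | P x} = ∑ b, #{x | P x ∧ f x = b} := by
  rw [card_eq_sum_card_fiberwise (f := f) (t := univ) (by simp)]
  simp only [filter_filter]

theorem card_filter_and_apply_eq_mul_card {ι : Type*} [Fintype ι] [DecidableEq ι]
    {β : ι → Type*} [∀ i, Fintype (β i)] [∀ i, DecidableEq (β i)]
    {P : (∀ i, β i) → Prop} [DecidablePred P] {c : ι}
    (hP : ∀ f g : ∀ i, β i, (∀ i, i ≠ c → f i = g i) → (P f ↔ P g)) (y : β c) :
    #{f | P f ∧ f c = y} * Fintype.card (β c) = #{f | P f} := by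
  have hupdate : ∀ f (y' : β c), P (Function.update f c y') ↔ P f := fun f y' =>
    hP _ _ fun i hi => Function.update_of_ne hi _ _
  have fiber_eq : ∀ y' : β c, #{f | P f ∧ f c = y'} = #{f | P f ∧ f c = y} := fun y' =>
    card_nbij' (Function.update · c y) (Function.update · c y')
      (fun f hf => by simp_all) (fun f hf => by simp_all)
      (fun f hf => by simp_all) (fun f hf => by simp_all)
  rw [card_eq_sum_card_filter_and P (· c)]
  simp only [fiber_eq, sum_const, card_univ, smul_eq_mul, mul_comm]

section layeredWalk

variable {n t : ℕ} (ht : 0 < t)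

theorem layeredWalk_succ_of_lt (σ : Fin n → Fin (2 * t) → Fin t → Fin n × Fin (2 * t))
    (s : Fin n × Fin (2 * t)) {k : ℕ} (hk : k < t) :
    layeredWalk ht σ s (k + 1) =
      σ (layeredWalk ht σ s k).1 (layeredWalk ht σ s k).2 ⟨k, hk⟩ := by
  simp only [layeredWalk, Nat.mod_eq_of_lt hk]

theorem layeredWalk_succ_eq_of_eq {σ : Fin n → Fin (2 * t) → Fin t → Fin n × Fin (2 * t)}
    {s₁ s₂ : Fin n × Fin (2 * t)} {k : ℕ} (h : layeredWalk ht σ s₁ k = layeredWalk ht σ s₂ k) :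
    layeredWalk ht σ s₁ (k + 1) = layeredWalk ht σ s₂ (k + 1) := by
  rw [layeredWalk, layeredWalk, h]

theorem layeredWalk_congr {σ σ' : Fin n → Fin (2 * t) → Fin t → Fin n × Fin (2 * t)} {k : ℕ}
    (h : ∀ v i (j : Fin t), (j : ℕ) < k → σ v i j = σ' v i j) (s : Fin n × Fin (2 * t)) :
    layeredWalk ht σ s k = layeredWalk ht σ' s k := by
  induction k with
  | zero => rfl
  | succ k ih =>
    rw [layeredWalk, layeredWalk, ih fun v i j hj => h v i j (by omega)]
    exact h _ _ _ (Nat.lt_succ_of_le (Nat.mod_le k t))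

theorem layeredWalk_eq_of_forall_ne {σ σ' : Fin n → Fin (2 * t) → Fin t → Fin n × Fin (2 * t)}
    {v : Fin n} {i : Fin (2 * t)} {j : Fin t}
    (h : ∀ v' i' j', (v', i', j') ≠ (v, i, j) → σ v' i' j' = σ' v' i' j')
    (s : Fin n × Fin (2 * t)) :
    layeredWalk ht σ s j = layeredWalk ht σ' s j :=
  layeredWalk_congr ht (fun _ _ _ hj => h _ _ _ fun he => by simp_all) s

end layeredWalk

namespace SampledLayered

variable {n Δ t : ℕ} {G : SimpleGraph (Fin n)} [DecidableRel G.Adj]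

def equivPi : SampledLayered G t ≃
    ∀ c : Fin n × Fin (2 * t) × Fin t, {y : Fin n × Fin (2 * t) // G.Adj c.1 y.1} where
  toFun σ c := ⟨σ.1 c.1 c.2.1 c.2.2, σ.2 _ _ _⟩
  invFun f := ⟨fun v i j => (f (v, i, j)).1, fun v i j => (f (v, i, j)).2⟩

theorem card_filter_adj (hreg : G.IsRegularOfDegree Δ) (v : Fin n) :
    #{y : Fin n × Fin (2 * t) | G.Adj v y.1} = Δ * (2 * t) := by
  rw [← univ_product_univ, filter_product_left (G.Adj v), card_product,
    ← SimpleGraph.neighborFinset_eq_filter, SimpleGraph.card_neighborFinset_eq_degree, hreg v,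
    card_univ, Fintype.card_fin]

theorem card_filter_and_apply_eq (hreg : G.IsRegularOfDegree Δ)
    {P : SampledLayered G t → Prop} [DecidablePred P] {v : Fin n} {i : Fin (2 * t)} {j : Fin t}
    (hP : ∀ σ σ' : SampledLayered G t,
      (∀ v' i' j', (v', i', j') ≠ (v, i, j) → σ.1 v' i' j' = σ'.1 v' i' j') → (P σ ↔ P σ'))
    (x : Fin n × Fin (2 * t)) :
    #{σ | P σ ∧ σ.1 v i j = x} * (Δ * (2 * t)) = if G.Adj v x.1 then #{σ | P σ} else 0 := by
  split_ifs with hx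
  · have hP' : ∀ f g : ∀ c : Fin n × Fin (2 * t) × Fin t,
        {y : Fin n × Fin (2 * t) // G.Adj c.1 y.1}, (∀ c, c ≠ (v, i, j) → f c = g c) →
          (P (equivPi.symm f) ↔ P (equivPi.symm g)) :=
      fun f g hfg => hP _ _ fun v' i' j' h => congrArg Subtype.val (hfg (v', i', j') h)
    have key := card_filter_and_apply_eq_mul_card hP' ⟨x, hx⟩
    rw [Fintype.card_subtype, card_filter_adj hreg] at key
    have hpinned : #{σ | P σ ∧ σ.1 v i j = x} =
        #{f | P (equivPi.symm f) ∧ f (v, i, j) = ⟨x, hx⟩} :=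
      card_equiv equivPi fun σ => by
        simp only [mem_filter, mem_univ, true_and, Equiv.symm_apply_apply, Subtype.ext_iff]
        rfl
    have hall : #{σ | P σ} = #{f | P (equivPi.symm f)} :=
      card_equiv equivPi fun σ => by
        simp only [mem_filter, mem_univ, true_and, Equiv.symm_apply_apply]
    rw [hpinned, hall, key]
  · simp only [mul_eq_zero, card_eq_zero, filter_eq_empty_iff]
    exact Or.inl fun σ _ ⟨_, hσ⟩ => hx (hσ ▸ σ.2 v i j)

variable (ht : 0 < t)

theorem card_walk_succ (hreg : G.IsRegularOfDegree Δ) {k : ℕ} (hk : k < t)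
    (s q b : Fin n × Fin (2 * t)) :
    #{σ : SampledLayered G t | layeredWalk ht σ.1 s k = q ∧ layeredWalk ht σ.1 s (k + 1) = b} *
        (Δ * (2 * t)) =
      if G.Adj q.1 b.1 then #{σ : SampledLayered G t | layeredWalk ht σ.1 s k = q} else 0 := by
  have hpin : ∀ σ : SampledLayered G t,
      (layeredWalk ht σ.1 s k = q ∧ layeredWalk ht σ.1 s (k + 1) = b) ↔
        layeredWalk ht σ.1 s k = q ∧ σ.1 q.1 q.2 ⟨k, hk⟩ = b := by
    intro σ
    rw [layeredWalk_succ_of_lt ht _ _ hk]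
    constructor <;> rintro ⟨rfl, h⟩ <;> exact ⟨rfl, h⟩
  simp_rw [hpin]
  exact card_filter_and_apply_eq hreg (fun σ σ' h => by rw [layeredWalk_eq_of_forall_ne ht h]) b

theorem card_walks_succ (hreg : G.IsRegularOfDegree Δ) {k : ℕ} (hk : k < t)
    (s₁ s₂ : Fin n × Fin (2 * t)) {p q : Fin n × Fin (2 * t)} (hpq : p ≠ q)
    (a b : Fin n × Fin (2 * t)) :
    #{σ : SampledLayered G t | layeredWalk ht σ.1 s₁ k = p ∧ layeredWalk ht σ.1 s₂ k = q ∧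
        layeredWalk ht σ.1 s₁ (k + 1) = a ∧ layeredWalk ht σ.1 s₂ (k + 1) = b} *
        (Δ * (2 * t)) ^ 2 =
      if G.Adj p.1 a.1 ∧ G.Adj q.1 b.1 then
        #{σ : SampledLayered G t | layeredWalk ht σ.1 s₁ k = p ∧ layeredWalk ht σ.1 s₂ k = q}
      else 0 := by
  have hpin : ∀ σ : SampledLayered G t, (layeredWalk ht σ.1 s₁ k = p ∧
      layeredWalk ht σ.1 s₂ k = q ∧ layeredWalk ht σ.1 s₁ (k + 1) = a ∧
      layeredWalk ht σ.1 s₂ (k + 1) = b) ↔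
      ((layeredWalk ht σ.1 s₁ k = p ∧ layeredWalk ht σ.1 s₂ k = q) ∧
        σ.1 q.1 q.2 ⟨k, hk⟩ = b) ∧ σ.1 p.1 p.2 ⟨k, hk⟩ = a := by
    intro σ
    simp only [layeredWalk_succ_of_lt ht _ _ hk]
    constructor
    · rintro ⟨rfl, rfl, ha, hb⟩; exact ⟨⟨⟨rfl, rfl⟩, hb⟩, ha⟩
    · rintro ⟨⟨⟨rfl, rfl⟩, hb⟩, ha⟩; exact ⟨rfl, rfl, ha, hb⟩
  simp_rw [hpin]
  rw [sq, ← mul_assoc, card_filter_and_apply_eq hreg (fun σ σ' h => by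
    rw [layeredWalk_eq_of_forall_ne ht h, layeredWalk_eq_of_forall_ne ht h,
      h q.1 q.2 _ fun he => hpq (by simp_all [Prod.ext_iff])])]
  rw [ite_mul, zero_mul, card_filter_and_apply_eq hreg (fun σ σ' h => by
    rw [layeredWalk_eq_of_forall_ne ht h, layeredWalk_eq_of_forall_ne ht h]), ite_and]

theorem card_apart_succ (hreg : G.IsRegularOfDegree Δ) {k : ℕ} (hk : k < t)
    (s₁ s₂ a b : Fin n × Fin (2 * t)) :
    #{σ : SampledLayered G t | layeredWalk ht σ.1 s₁ k ≠ layeredWalk ht σ.1 s₂ k ∧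
        layeredWalk ht σ.1 s₁ (k + 1) = a ∧ layeredWalk ht σ.1 s₂ (k + 1) = b} *
        (Δ * (2 * t)) ^ 2 =
      ∑ q with G.Adj q.1 b.1, ∑ p with p ≠ q ∧ G.Adj p.1 a.1,
        #{σ : SampledLayered G t | layeredWalk ht σ.1 s₁ k = p ∧ layeredWalk ht σ.1 s₂ k = q} := by
  rw [card_eq_sum_card_filter_and _ fun σ => (layeredWalk ht σ.1 s₂ k, layeredWalk ht σ.1 s₁ k),
    sum_mul, Fintype.sum_prod_type, sum_filter]
  refine sum_congr rfl fun q _ => ?_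
  rw [sum_filter, ite_sum_zero]
  refine sum_congr rfl fun p _ => ?_
  by_cases hpq : p = q
  · subst hpq
    simp only [ne_eq, not_true_eq_false, false_and, if_false, ite_self, mul_eq_zero,
      card_eq_zero, filter_eq_empty_iff, Prod.mk.injEq]
    exact Or.inl fun σ _ h => h.1.1 (h.2.2.trans h.2.1.symm)
  · have hfiber : ∀ σ : SampledLayered G t, ((layeredWalk ht σ.1 s₁ k ≠ layeredWalk ht σ.1 s₂ k ∧
        layeredWalk ht σ.1 s₁ (k + 1) = a ∧ layeredWalk ht σ.1 s₂ (k + 1) = b) ∧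
        (layeredWalk ht σ.1 s₂ k, layeredWalk ht σ.1 s₁ k) = (q, p)) ↔
        layeredWalk ht σ.1 s₁ k = p ∧ layeredWalk ht σ.1 s₂ k = q ∧
        layeredWalk ht σ.1 s₁ (k + 1) = a ∧ layeredWalk ht σ.1 s₂ (k + 1) = b := by
      intro σ
      simp only [Prod.mk.injEq]
      constructor
      · rintro ⟨⟨-, ha, hb⟩, rfl, rfl⟩; exact ⟨rfl, rfl, ha, hb⟩
      · rintro ⟨rfl, rfl, ha, hb⟩; exact ⟨⟨hpq, ha, hb⟩, rfl, rfl⟩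
    simp_rw [hfiber]
    rw [card_walks_succ ht hreg hk s₁ s₂ hpq]
    by_cases hp : G.Adj p.1 a.1 <;> by_cases hq : G.Adj q.1 b.1 <;> simp [hpq, hp, hq]

theorem card_walks_succ_eq_card_apart {k : ℕ} (s₁ s₂ : Fin n × Fin (2 * t))
    {a b : Fin n × Fin (2 * t)} (hab : a ≠ b) :
    #{σ : SampledLayered G t |
      layeredWalk ht σ.1 s₁ (k + 1) = a ∧ layeredWalk ht σ.1 s₂ (k + 1) = b} =
    #{σ : SampledLayered G t | layeredWalk ht σ.1 s₁ k ≠ layeredWalk ht σ.1 s₂ k ∧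
      layeredWalk ht σ.1 s₁ (k + 1) = a ∧ layeredWalk ht σ.1 s₂ (k + 1) = b} :=
  congrArg card <| filter_congr fun _ _ =>
    ⟨fun h => ⟨fun hmeet => hab (h.1.symm.trans ((layeredWalk_succ_eq_of_eq ht hmeet).trans h.2)),
      h⟩, And.right⟩

theorem card_first_meet_eq_sum {k : ℕ} (s₁ s₂ : Fin n × Fin (2 * t)) :
    #{σ : SampledLayered G t | layeredWalk ht σ.1 s₁ k ≠ layeredWalk ht σ.1 s₂ k ∧
      layeredWalk ht σ.1 s₁ (k + 1) = layeredWalk ht σ.1 s₂ (k + 1)} =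
    ∑ x, #{σ : SampledLayered G t | layeredWalk ht σ.1 s₁ k ≠ layeredWalk ht σ.1 s₂ k ∧
      layeredWalk ht σ.1 s₁ (k + 1) = x ∧ layeredWalk ht σ.1 s₂ (k + 1) = x} := by
  rw [card_eq_sum_card_filter_and _ fun σ => layeredWalk ht σ.1 s₂ (k + 1)]
  refine sum_congr rfl fun x _ => congrArg card (filter_congr fun σ _ => ?_)
  constructor
  · rintro ⟨⟨hne, hmeet⟩, rfl⟩; exact ⟨hne, hmeet, rfl⟩
  · rintro ⟨hne, rfl, hx⟩; exact ⟨⟨hne, hx.symm⟩, hx⟩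

theorem sum_card_walk (hreg : G.IsRegularOfDegree Δ) {k : ℕ} (hk : k < t)
    (s b : Fin n × Fin (2 * t)) :
    ∑ q with G.Adj q.1 b.1, #{σ : SampledLayered G t | layeredWalk ht σ.1 s k = q} =
      #{σ : SampledLayered G t | layeredWalk ht σ.1 s (k + 1) = b} * (Δ * (2 * t)) := by
  rw [card_eq_sum_card_filter_and _ fun σ => layeredWalk ht σ.1 s k, sum_mul, sum_filter]
  refine sum_congr rfl fun q _ => ?_
  simp_rw [and_comm (a := layeredWalk ht _ s (k + 1) = b)]
  rw [card_walk_succ ht hreg hk]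

theorem card_filter_adj_left (hreg : G.IsRegularOfDegree Δ) (x : Fin n) :
    #{p : Fin n × Fin (2 * t) | G.Adj p.1 x} = Δ * (2 * t) := by
  simp_rw [G.adj_comm _ x]
  exact card_filter_adj hreg x

-- Reducible, so that facts about `start ht w` are recognised in the literal `(w, ⟨0, _⟩)`.
abbrev start (v : Fin n) : Fin n × Fin (2 * t) := (v, ⟨0, by omega⟩)

variable (G) in
def apartWeight (u : Fin n) (k : ℕ) (a q : Fin n × Fin (2 * t)) : ℕ :=
  ∑ w ∈ univ.erase u, ∑ p with p ≠ q ∧ G.Adj p.1 a.1,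
    #{σ : SampledLayered G t |
      layeredWalk ht σ.1 (start ht w) k = p ∧ layeredWalk ht σ.1 (start ht u) k = q}

theorem sum_card_apart_succ (hreg : G.IsRegularOfDegree Δ) {k : ℕ} (hk : k < t) (u : Fin n)
    (a b : Fin n × Fin (2 * t)) :
    (∑ w ∈ univ.erase u, #{σ : SampledLayered G t |
      layeredWalk ht σ.1 (start ht w) k ≠ layeredWalk ht σ.1 (start ht u) k ∧
      layeredWalk ht σ.1 (start ht w) (k + 1) = a ∧
      layeredWalk ht σ.1 (start ht u) (k + 1) = b}) * (Δ * (2 * t)) ^ 2 =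
      ∑ q with G.Adj q.1 b.1, apartWeight G ht u k a q := by
  simp only [sum_mul, card_apart_succ ht hreg hk, apartWeight]
  exact sum_comm

theorem apartWeight_zero_le (hreg : G.IsRegularOfDegree Δ) (u : Fin n)
    (a q : Fin n × Fin (2 * t)) :
    apartWeight G ht u 0 a q ≤
      Δ * #{σ : SampledLayered G t | layeredWalk ht σ.1 (start ht u) 0 = q} := by
  set N := #{σ : SampledLayered G t | layeredWalk ht σ.1 (start ht u) 0 = q}
  have hterm : ∀ w ∈ univ.erase u, ∑ p with p ≠ q ∧ G.Adj p.1 a.1,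
      #{σ : SampledLayered G t |
        layeredWalk ht σ.1 (start ht w) 0 = p ∧ layeredWalk ht σ.1 (start ht u) 0 = q} ≤
      if G.Adj a.1 w then N else 0 := by
    intro w _
    rw [sum_filter, sum_eq_single (start ht w) (fun p _ hp => by simp [layeredWalk, Ne.symm hp])
      (by simp)]
    split_ifs with hp ha
    · exact card_le_card (monotone_filter_right _ fun _ _ h => h.2)
    · exact absurd hp.2.symm ha
    · exact Nat.zero_le _
    · exact Nat.zero_le _
  calc apartWeight G ht u 0 a q
      ≤ ∑ w ∈ univ.erase u, if G.Adj a.1 w then N else 0 := sum_le_sum hterm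
    _ ≤ ∑ w, if G.Adj a.1 w then N else 0 := sum_le_sum_of_subset (subset_univ _)
    _ = Δ * N := by
        rw [← sum_filter, sum_const, smul_eq_mul, ← SimpleGraph.neighborFinset_eq_filter,
          SimpleGraph.card_neighborFinset_eq_degree, hreg a.1]

theorem apartWeight_le (hreg : G.IsRegularOfDegree Δ) (hΔ : 0 < Δ) (u : Fin n) {k : ℕ}
    (hk : k ≤ t) (a q : Fin n × Fin (2 * t)) :
    apartWeight G ht u k a q ≤
      Δ * #{σ : SampledLayered G t | layeredWalk ht σ.1 (start ht u) k = q} := by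
  induction k generalizing a q with
  | zero => exact apartWeight_zero_le ht hreg u a q
  | succ k ih =>
    have hk : k < t := by omega
    refine Nat.le_of_mul_le_mul_right ?_ (by positivity : 0 < (Δ * (2 * t)) ^ 2)
    calc apartWeight G ht u (k + 1) a q * (Δ * (2 * t)) ^ 2
        = ∑ p with p ≠ q ∧ G.Adj p.1 a.1, ∑ r with G.Adj r.1 q.1, apartWeight G ht u k p r := by
          rw [apartWeight, sum_comm, sum_mul]
          refine sum_congr rfl fun p hp => ?_
          simp only [card_walks_succ_eq_card_apart ht _ _ (mem_filter.1 hp).2.1]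
          exact sum_card_apart_succ ht hreg hk u p q
      _ ≤ ∑ p with G.Adj p.1 a.1, ∑ r with G.Adj r.1 q.1,
            Δ * #{σ : SampledLayered G t | layeredWalk ht σ.1 (start ht u) k = r} :=
          (sum_le_sum fun p _ => sum_le_sum fun r _ => ih (by omega) p r).trans
            (sum_le_sum_of_subset (monotone_filter_right _ fun _ _ h => h.2))
      _ = Δ * #{σ : SampledLayered G t | layeredWalk ht σ.1 (start ht u) (k + 1) = q} *
            (Δ * (2 * t)) ^ 2 := by
          rw [sum_const, card_filter_adj_left hreg, ← mul_sum, sum_card_walk ht hreg hk]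
          simp only [smul_eq_mul]
          ring

theorem sum_card_first_meet_le (hreg : G.IsRegularOfDegree Δ) (hΔ : 0 < Δ) {k : ℕ} (hk : k < t)
    (u : Fin n) :
    (∑ w ∈ univ.erase u, #{σ : SampledLayered G t |
      layeredWalk ht σ.1 (start ht w) k ≠ layeredWalk ht σ.1 (start ht u) k ∧
      layeredWalk ht σ.1 (start ht w) (k + 1) = layeredWalk ht σ.1 (start ht u) (k + 1)}) *
        (2 * t) ≤ Fintype.card (SampledLayered G t) := by
  refine Nat.le_of_mul_le_mul_right ?_ (by positivity : 0 < Δ * (Δ * (2 * t)))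
  calc (∑ w ∈ univ.erase u, #{σ : SampledLayered G t |
        layeredWalk ht σ.1 (start ht w) k ≠ layeredWalk ht σ.1 (start ht u) k ∧
        layeredWalk ht σ.1 (start ht w) (k + 1) = layeredWalk ht σ.1 (start ht u) (k + 1)}) *
          (2 * t) * (Δ * (Δ * (2 * t)))
      = ∑ x, (∑ w ∈ univ.erase u, #{σ : SampledLayered G t |
          layeredWalk ht σ.1 (start ht w) k ≠ layeredWalk ht σ.1 (start ht u) k ∧
          layeredWalk ht σ.1 (start ht w) (k + 1) = x ∧
          layeredWalk ht σ.1 (start ht u) (k + 1) = x}) * (Δ * (2 * t)) ^ 2 := by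
        simp only [card_first_meet_eq_sum ht, ← sum_mul]
        rw [sum_comm, mul_assoc]
        ring
    _ = ∑ x, ∑ r with G.Adj r.1 x.1, apartWeight G ht u k x r :=
        sum_congr rfl fun x _ => sum_card_apart_succ ht hreg hk u x x
    _ ≤ ∑ x, ∑ r with G.Adj r.1 x.1,
          Δ * #{σ : SampledLayered G t | layeredWalk ht σ.1 (start ht u) k = r} :=
        sum_le_sum fun x _ => sum_le_sum fun r _ => apartWeight_le ht hreg hΔ u hk.le x r
    _ = Fintype.card (SampledLayered G t) * (Δ * (Δ * (2 * t))) := by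
        simp only [← mul_sum, sum_card_walk ht hreg hk, ← sum_mul]
        rw [← card_eq_sum_card_fiberwise (by simp), card_univ]
        ring

theorem card_meet_le_sum_card_first_meet (σ : SampledLayered G t) (u : Fin n) :
    #{w | w ≠ u ∧ ∃ k ≤ t,
      layeredWalk ht σ.1 (start ht w) k = layeredWalk ht σ.1 (start ht u) k} ≤
    ∑ k ∈ range t, #{w ∈ univ.erase u |
      layeredWalk ht σ.1 (start ht w) k ≠ layeredWalk ht σ.1 (start ht u) k ∧
      layeredWalk ht σ.1 (start ht w) (k + 1) = layeredWalk ht σ.1 (start ht u) (k + 1)} := by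
  refine (card_le_card fun w hw => ?_).trans card_biUnion_le
  obtain ⟨hwu, m, hm, hmeet⟩ := (mem_filter.1 hw).2
  obtain ⟨k, hbefore, hk, hafter⟩ := Nat.exists_not_and_succ_of_not_zero_of_exists
    (p := fun m => m ≤ t ∧
      layeredWalk ht σ.1 (start ht w) m = layeredWalk ht σ.1 (start ht u) m)
    (by simp [layeredWalk, start, hwu]) ⟨m, hm, hmeet⟩
  exact mem_biUnion.2 ⟨k, mem_range.2 hk, mem_filter.2
    ⟨mem_erase.2 ⟨hwu, mem_univ w⟩, fun h => hbefore ⟨by omega, h⟩, hafter⟩⟩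

theorem sum_card_meet_mul_two_le (hreg : G.IsRegularOfDegree Δ) (hΔ : 0 < Δ) (u : Fin n) :
    (∑ σ : SampledLayered G t, #{w | w ≠ u ∧ ∃ k ≤ t,
      layeredWalk ht σ.1 (start ht w) k = layeredWalk ht σ.1 (start ht u) k}) * 2 ≤
      Fintype.card (SampledLayered G t) := by
  refine Nat.le_of_mul_le_mul_right ?_ ht
  calc (∑ σ : SampledLayered G t, #{w | w ≠ u ∧ ∃ k ≤ t,
        layeredWalk ht σ.1 (start ht w) k = layeredWalk ht σ.1 (start ht u) k}) * 2 * t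
      ≤ ∑ k ∈ range t, (∑ w ∈ univ.erase u, #{σ : SampledLayered G t |
          layeredWalk ht σ.1 (start ht w) k ≠ layeredWalk ht σ.1 (start ht u) k ∧
          layeredWalk ht σ.1 (start ht w) (k + 1) = layeredWalk ht σ.1 (start ht u) (k + 1)}) *
          (2 * t) := by
        rw [mul_assoc, ← sum_mul]
        gcongr
        refine (sum_le_sum fun σ _ => card_meet_le_sum_card_first_meet ht σ u).trans_eq ?_
        rw [sum_comm]
        exact sum_congr rfl fun k _ => sum_card_bipartiteAbove_eq_sum_card_bipartiteBelow _
    _ ≤ ∑ k ∈ range t, Fintype.card (SampledLayered G t) :=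
        sum_le_sum fun k hk => sum_card_first_meet_le ht hreg hΔ (mem_range.1 hk) u
    _ = Fintype.card (SampledLayered G t) * t := by
        rw [sum_const, card_range, smul_eq_mul, mul_comm]

theorem card_not_disjoint_le_sum_card_meet (u : Fin n) :
    #{σ : SampledLayered G t | ¬ ∀ w, w ≠ u → ∀ k ≤ t,
      layeredWalk ht σ.1 (start ht w) k ≠ layeredWalk ht σ.1 (start ht u) k} ≤
    ∑ σ : SampledLayered G t, #{w | w ≠ u ∧ ∃ k ≤ t,
      layeredWalk ht σ.1 (start ht w) k = layeredWalk ht σ.1 (start ht u) k} := by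
  rw [card_filter]
  refine sum_le_sum fun σ _ => ?_
  split_ifs with h
  · exact Nat.zero_le _
  · push Not at h
    obtain ⟨w, hw, k, hk, hmeet⟩ := h
    exact card_pos.2 ⟨w, mem_filter.2 ⟨mem_univ w, hw, k, hk, hmeet⟩⟩

theorem card_mul_two_le_card_disjoint (hreg : G.IsRegularOfDegree Δ) (hΔ : 0 < Δ) (u : Fin n) :
    Fintype.card (SampledLayered G t) ≤ #{σ : SampledLayered G t | ∀ w, w ≠ u → ∀ k ≤ t,
      layeredWalk ht σ.1 (start ht w) k ≠ layeredWalk ht σ.1 (start ht u) k} * 2 := by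
  have hsplit := card_filter_add_card_filter_not (s := (univ : Finset (SampledLayered G t)))
    fun σ => ∀ w, w ≠ u → ∀ k ≤ t,
      layeredWalk ht σ.1 (start ht w) k ≠ layeredWalk ht σ.1 (start ht u) k
  have hbad := card_not_disjoint_le_sum_card_meet ht (G := G) u
  have hmeet := sum_card_meet_mul_two_le ht hreg hΔ u
  rw [card_univ] at hsplit
  omega

end SampledLayered

/-- In a uniformly sampled layered subgraph of the layered graph of a `Δ`-regular graph
`G` (each vertex independently keeps one uniformly random outgoing edge — here modelled
by counting over all sampled subgraphs), for a fixed `α = (u,1,1) ∈ 𝒱₁*`: the expected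
number of paths from other vertices of `𝒱₁*` meeting the path `P_α` at some layer is at
most `1/2`, and hence with probability at least `1/2` the path `P_α` is vertex-disjoint
from all paths `P_β`, `β ≠ α ∈ 𝒱₁*`. -/
theorem sampled_layered_paths_disjoint {n Δ t : ℕ} (ht : 0 < t) (hΔ : 0 < Δ)
    (G : SimpleGraph (Fin n)) [DecidableRel G.Adj] (hreg : G.IsRegularOfDegree Δ)
    (u : Fin n) :
    (∑ σ : SampledLayered G t,
        ((Nat.card {w : Fin n // w ≠ u ∧ ∃ k ≤ t,
            layeredWalk ht σ.1 (w, ⟨0, by omega⟩) k =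
              layeredWalk ht σ.1 (u, ⟨0, by omega⟩) k}) : ℝ))
      ≤ (1 / 2) * Nat.card (SampledLayered G t) ∧
    ((Nat.card {σ : SampledLayered G t // ∀ w : Fin n, w ≠ u → ∀ k ≤ t,
        layeredWalk ht σ.1 (w, ⟨0, by omega⟩) k ≠
          layeredWalk ht σ.1 (u, ⟨0, by omega⟩) k}) : ℝ)
      ≥ (1 / 2) * Nat.card (SampledLayered G t) := by
  have hmeet := SampledLayered.sum_card_meet_mul_two_le ht hreg hΔ u
  have hgood := SampledLayered.card_mul_two_le_card_disjoint ht hreg hΔ u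
  simp only [Nat.card_eq_fintype_card, Fintype.card_subtype] at hmeet hgood ⊢
  rify at hmeet hgood
  constructor <;> linarith
end

section
/- Consider throwing N balls independently into B bins where N ≤ ε·B for ε ∈ (0,1/100), with each ball landing in any given bin with probability in the range (1±ε)/B. Then the number X of non-empty bins satisfies Pr[X ∉ (1±2ε)·N] ≤ exp(−ε²N/2). -/
open Classical in
lemma card_image_add_coll (n B : ℕ) (f : Fin n → Fin B) :
    (Finset.univ.image f).card
      + (Finset.univ.filter (fun i => ∃ j, j < i ∧ f j = f i)).card = n := by
  classical
  have key : (Finset.univ.filter (fun i => ¬ ∃ j, j < i ∧ f j = f i)).card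
      = (Finset.univ.image f).card := by
    apply Finset.card_bij (fun a _ => f a)
    · intro a ha
      exact Finset.mem_image_of_mem f (Finset.mem_univ a)
    · intro a₁ h₁ a₂ h₂ hf
      simp only [Finset.mem_filter, Finset.mem_univ, true_and, not_exists] at h₁ h₂
      by_contra hne
      rcases lt_or_gt_of_ne hne with h | h
      · exact h₂ a₁ ⟨h, hf⟩
      · exact h₁ a₂ ⟨h, hf.symm⟩
    · intro b hb
      rw [Finset.mem_image] at hb
      obtain ⟨a, -, ha⟩ := hb
      have hne : (Finset.univ.filter (fun i => f i = b)).Nonempty :=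
        ⟨a, by simpa using ha⟩
      refine ⟨(Finset.univ.filter (fun i => f i = b)).min' hne, ?_, ?_⟩
      · simp only [Finset.mem_filter, Finset.mem_univ, true_and, not_exists]
        intro j ⟨hjlt, hje⟩
        have hmem : (Finset.univ.filter (fun i => f i = b)).min' hne
            ∈ Finset.univ.filter (fun i => f i = b) := Finset.min'_mem _ _
        simp only [Finset.mem_filter] at hmem
        have hfj : f j = b := hje.trans hmem.2
        have hle := Finset.min'_le (Finset.univ.filter (fun i => f i = b)) j
          (by simp [hfj])
        omega
      · have hmem := Finset.min'_mem (Finset.univ.filter (fun i => f i = b)) hne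
        simp only [Finset.mem_filter] at hmem
        exact hmem.2
  calc (Finset.univ.image f).card
        + (Finset.univ.filter (fun i => ∃ j, j < i ∧ f j = f i)).card
      = (Finset.univ.filter (fun i => ∃ j, j < i ∧ f j = f i)).card
        + (Finset.univ.filter (fun i => ¬ ∃ j, j < i ∧ f j = f i)).card := by
        rw [key]; ring
    _ = (Finset.univ : Finset (Fin n)).card :=
        Finset.card_filter_add_card_filter_not _
    _ = n := by simp


open Classical in
noncomputable def collZ {n B : ℕ} (f : Fin n → Fin B) : ℝ :=
  ∑ i, if ∃ j, j < i ∧ f j = f i then (1:ℝ) else 0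

open Classical in
lemma collZ_card {n B : ℕ} (f : Fin n → Fin B) :
    collZ f = ((Finset.univ.filter (fun i => ∃ j, j < i ∧ f j = f i)).card : ℝ) := by
  classical
  rw [collZ, Finset.card_filter]
  push_cast
  apply Finset.sum_congr rfl
  intro i _
  split <;> simp_all

open Classical in
lemma collZ_nonneg {n B : ℕ} (f : Fin n → Fin B) : 0 ≤ collZ f := by
  apply Finset.sum_nonneg; intro i _; split <;> norm_num

open Classical in
lemma collZ_snoc {n B : ℕ} (g : Fin n → Fin B) (b : Fin B) :
    collZ (Fin.snoc g b) = collZ g + (if ∃ j, g j = b then (1:ℝ) else 0) := by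
  classical
  rw [collZ, Fin.sum_univ_castSucc]
  congr 1
  · rw [collZ]
    apply Finset.sum_congr rfl
    intro i _
    congr 1
    apply propext
    constructor
    · rintro ⟨j, hjlt, hje⟩
      have hj : j ≠ Fin.last n := by
        intro h; subst h
        exact absurd hjlt (by simp [Fin.lt_iff_val_lt_val])
      obtain ⟨j', rfl⟩ := Fin.exists_castSucc_eq.2 hj
      refine ⟨j', ?_, ?_⟩
      · exact Fin.castSucc_lt_castSucc_iff.mp hjlt
      · simpa [Fin.snoc_castSucc] using hje
    · rintro ⟨j, hjlt, hje⟩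
      exact ⟨j.castSucc, Fin.castSucc_lt_castSucc_iff.mpr hjlt,
        by simpa [Fin.snoc_castSucc] using hje⟩
  · congr 1
    apply propext
    constructor
    · rintro ⟨j, hjlt, hje⟩
      have hj : j ≠ Fin.last n := Fin.ne_last_of_lt hjlt
      obtain ⟨j', rfl⟩ := Fin.exists_castSucc_eq.2 hj
      exact ⟨j', by simpa [Fin.snoc_castSucc, Fin.snoc_last] using hje⟩
    · rintro ⟨j, hje⟩
      exact ⟨j.castSucc, Fin.castSucc_lt_last j,
        by simpa [Fin.snoc_castSucc, Fin.snoc_last] using hje⟩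

open Classical in
lemma mgf_le (B M : ℕ) (t D : ℝ) (ht : 0 ≤ t) (hD : 0 ≤ D) :
    ∀ n : ℕ, n ≤ M → ∀ p : Fin n → Fin B → ℝ,
      (∀ i b, 0 ≤ p i b) → (∀ i b, p i b ≤ D) → (∀ i, ∑ b, p i b = 1) →
      ∑ f : Fin n → Fin B, (∏ i, p i (f i)) * Real.exp (t * collZ f)
        ≤ (1 + (Real.exp t - 1) * D * M) ^ n := by
  classical
  intro n
  induction n with
  | zero =>
      intro _ p _ _ _
      simp [collZ]
  | succ n ih =>
      intro hnM p hp0 hpD hpsum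
      have hnM' : n ≤ M := by omega
      -- reindex the sum over Fin (n+1) → Fin B via snoc
      have hre : ∑ f : Fin (n + 1) → Fin B, (∏ i, p i (f i)) * Real.exp (t * collZ f)
          = ∑ x : Fin B × (Fin n → Fin B),
              (∏ i, p i (Fin.snoc (α := fun _ => Fin B) x.2 x.1 i)) * Real.exp (t * collZ (Fin.snoc (α := fun _ => Fin B) x.2 x.1)) := by
        exact (Fintype.sum_equiv (Fin.snocEquiv (fun _ => Fin B)) _ _ (fun x => rfl)).symm
      rw [hre, Fintype.sum_prod_type_right]
      -- for each g, the inner sum over the last ball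
      have key : ∀ g : Fin n → Fin B,
          ∑ b : Fin B, (∏ i, p i (Fin.snoc (α := fun _ => Fin B) g b i)) * Real.exp (t * collZ (Fin.snoc (α := fun _ => Fin B) g b))
          ≤ ((∏ i : Fin n, p i.castSucc (g i)) * Real.exp (t * collZ g))
              * (1 + (Real.exp t - 1) * D * M) := by
        intro g
        have hprod : ∀ b : Fin B, ∏ i, p i (Fin.snoc (α := fun _ => Fin B) g b i)
            = (∏ i : Fin n, p i.castSucc (g i)) * p (Fin.last n) b := by
          intro b
          rw [Fin.prod_univ_castSucc]
          simp [Fin.snoc_castSucc, Fin.snoc_last]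
        have hZ : ∀ b : Fin B, Real.exp (t * collZ (Fin.snoc (α := fun _ => Fin B) g b))
            = Real.exp (t * collZ g) * Real.exp (t * (if ∃ j, g j = b then (1:ℝ) else 0)) := by
          intro b
          rw [collZ_snoc, mul_add, Real.exp_add]
        calc ∑ b : Fin B, (∏ i, p i (Fin.snoc (α := fun _ => Fin B) g b i)) * Real.exp (t * collZ (Fin.snoc (α := fun _ => Fin B) g b))
            = ((∏ i : Fin n, p i.castSucc (g i)) * Real.exp (t * collZ g))
              * ∑ b : Fin B, p (Fin.last n) b
                  * Real.exp (t * (if ∃ j, g j = b then (1:ℝ) else 0)) := by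
              rw [Finset.mul_sum]
              apply Finset.sum_congr rfl
              intro b _
              rw [hprod b, hZ b]; ring
          _ ≤ _ := by
              apply mul_le_mul_of_nonneg_left
              · -- inner sum bound
                have hsplit : ∑ b : Fin B, p (Fin.last n) b
                    * Real.exp (t * (if ∃ j, g j = b then (1:ℝ) else 0))
                    = 1 + (Real.exp t - 1) * ∑ b ∈ Finset.univ.image g, p (Fin.last n) b := by
                  have : ∀ b : Fin B, p (Fin.last n) b
                      * Real.exp (t * (if ∃ j, g j = b then (1:ℝ) else 0))
                      = p (Fin.last n) b
                        + (if b ∈ Finset.univ.image g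
                            then (Real.exp t - 1) * p (Fin.last n) b else 0) := by
                    intro b
                    by_cases hb : ∃ j, g j = b
                    · have hmem : b ∈ Finset.univ.image g := by
                        obtain ⟨j, hj⟩ := hb
                        exact Finset.mem_image.2 ⟨j, Finset.mem_univ j, hj⟩
                      rw [if_pos hb, if_pos hmem, mul_one]
                      ring
                    · have hmem : b ∉ Finset.univ.image g := by
                        simp only [Finset.mem_image]
                        rintro ⟨j, -, hj⟩; exact hb ⟨j, hj⟩
                      rw [if_neg hb, if_neg hmem, mul_zero, Real.exp_zero]
                      ring
                  rw [Finset.sum_congr rfl (fun b _ => this b), Finset.sum_add_distrib,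
                    hpsum, ← Finset.sum_filter]
                  congr 1
                  rw [← Finset.mul_sum]
                  congr 1
                  apply Finset.sum_congr
                  · ext b; simp
                  · intros; rfl
                rw [hsplit]
                have hcard : ∑ b ∈ Finset.univ.image g, p (Fin.last n) b
                    ≤ (M : ℝ) * D := by
                  calc ∑ b ∈ Finset.univ.image g, p (Fin.last n) b
                      ≤ (Finset.univ.image g).card • D :=
                        Finset.sum_le_card_nsmul _ _ D (fun b _ => hpD _ b)
                    _ = ((Finset.univ.image g).card : ℝ) * D := by
                        rw [nsmul_eq_mul]
                    _ ≤ (M : ℝ) * D := by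
                        apply mul_le_mul_of_nonneg_right _ hD
                        have h1 : (Finset.univ.image g).card ≤ n :=
                          le_trans (Finset.card_image_le) (by simp)
                        exact_mod_cast le_trans h1 hnM'
                have het : 0 ≤ Real.exp t - 1 := by
                  have := Real.one_le_exp ht; linarith
                nlinarith [hcard]
              · apply mul_nonneg
                · exact Finset.prod_nonneg (fun i _ => hp0 _ _)
                · exact le_of_lt (Real.exp_pos _)
      calc ∑ g : Fin n → Fin B, ∑ b : Fin B,
              (∏ i, p i (Fin.snoc (α := fun _ => Fin B) g b i)) * Real.exp (t * collZ (Fin.snoc (α := fun _ => Fin B) g b))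
          ≤ ∑ g : Fin n → Fin B,
              ((∏ i : Fin n, p i.castSucc (g i)) * Real.exp (t * collZ g))
              * (1 + (Real.exp t - 1) * D * M) :=
            Finset.sum_le_sum (fun g _ => key g)
        _ = (∑ g : Fin n → Fin B,
              (∏ i : Fin n, p i.castSucc (g i)) * Real.exp (t * collZ g))
              * (1 + (Real.exp t - 1) * D * M) := by rw [← Finset.sum_mul]
        _ ≤ (1 + (Real.exp t - 1) * D * M) ^ n * (1 + (Real.exp t - 1) * D * M) := by
            apply mul_le_mul_of_nonneg_right
            · exact ih hnM' (fun i => p i.castSucc) (fun i b => hp0 _ _)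
                (fun i b => hpD _ _) (fun i => hpsum _)
            · have het : 0 ≤ Real.exp t - 1 := by
                have := Real.one_le_exp ht; linarith
              have : 0 ≤ (Real.exp t - 1) * D * M := by positivity
              linarith
        _ = (1 + (Real.exp t - 1) * D * M) ^ (n + 1) := by ring

open Classical in
/-- Balls and bins: `N` balls are thrown independently into `B` bins, `N ≤ ε·B` with
`ε ∈ (0,1/100)`, and each ball lands in any given bin with probability in `(1±ε)/B`.
Then the number `X` of non-empty bins satisfies
`Pr[X ∉ (1±2ε)·N] ≤ exp(−ε²N/2)`. The product measure on outcomes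
`f : Fin N → Fin B` has mass `∏ i, p i (f i)`. -/
theorem balls_and_bins_nonempty_concentration {N B : ℕ} (ε : ℝ)
    (hε : ε ∈ Set.Ioo (0 : ℝ) (1 / 100)) (hNB : (N : ℝ) ≤ ε * B)
    (p : Fin N → Fin B → ℝ)
    (hp0 : ∀ i b, (1 - ε) / B ≤ p i b) (hp1 : ∀ i b, p i b ≤ (1 + ε) / B)
    (hpsum : ∀ i, ∑ b, p i b = 1) :
    ∑ f ∈ Finset.univ.filter (fun f : Fin N → Fin B =>
        ((Finset.univ.image f).card : ℝ) < (1 - 2 * ε) * N ∨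
          (1 + 2 * ε) * N < ((Finset.univ.image f).card : ℝ)),
      ∏ i, p i (f i)
    ≤ Real.exp (-(ε ^ 2 * N) / 2) := by
  classical
  obtain ⟨hε0, hε1⟩ := hε
  rcases Nat.eq_zero_or_pos N with hN | hN
  · subst hN
    have : (Finset.univ.filter (fun f : Fin 0 → Fin B =>
        ((Finset.univ.image f).card : ℝ) < (1 - 2 * ε) * (0:ℕ) ∨
          (1 + 2 * ε) * (0:ℕ) < ((Finset.univ.image f).card : ℝ))) = ∅ := by
      apply Finset.filter_false_of_mem
      intro f _
      simp
    rw [this]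
    simp [le_of_lt (Real.exp_pos _)]
  -- N ≥ 1, hence B ≥ 1
  have hB : 0 < B := by
    by_contra hB
    have hB0 : B = 0 := by omega
    subst hB0
    have := hpsum ⟨0, hN⟩
    simp at this
  have hB0 : (0:ℝ) < B := by exact_mod_cast hB
  have hN0 : (0:ℝ) < N := by exact_mod_cast hN
  set μ : (Fin N → Fin B) → ℝ := fun f => ∏ i, p i (f i) with hμ
  have hμ0 : ∀ f, 0 ≤ μ f := by
    intro f
    apply Finset.prod_nonneg
    intro i _
    refine le_trans ?_ (hp0 i (f i))
    apply div_nonneg (by linarith) (le_of_lt hB0)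
  -- on the event, collZ f > 2εN
  have hev : ∀ f : Fin N → Fin B,
      (((Finset.univ.image f).card : ℝ) < (1 - 2 * ε) * N ∨
        (1 + 2 * ε) * N < ((Finset.univ.image f).card : ℝ)) →
      2 * ε * N < collZ f := by
    intro f hf
    have hcard := card_image_add_coll N B f
    have hcardR : ((Finset.univ.image f).card : ℝ) + collZ f = N := by
      rw [collZ_card]
      exact_mod_cast hcard
    have hle : ((Finset.univ.image f).card : ℝ) ≤ N := by
      have := collZ_nonneg f; linarith
    rcases hf with hf | hf
    · linarith
    · nlinarith
  set t : ℝ := 1/2 with htdef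
  set D : ℝ := (1 + ε) / B with hDdef
  have hD : 0 ≤ D := by positivity
  have hmgf := mgf_le B N t D (by norm_num) hD N le_rfl p
    (fun i b => le_trans (div_nonneg (by linarith) (le_of_lt hB0)) (hp0 i b)) hp1 hpsum
  calc ∑ f ∈ Finset.univ.filter (fun f : Fin N → Fin B =>
        ((Finset.univ.image f).card : ℝ) < (1 - 2 * ε) * N ∨
          (1 + 2 * ε) * N < ((Finset.univ.image f).card : ℝ)), μ f
      ≤ ∑ f ∈ Finset.univ.filter (fun f : Fin N → Fin B =>
        ((Finset.univ.image f).card : ℝ) < (1 - 2 * ε) * N ∨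
          (1 + 2 * ε) * N < ((Finset.univ.image f).card : ℝ)),
          Real.exp (-(ε * N)) * (μ f * Real.exp (t * collZ f)) := by
        apply Finset.sum_le_sum
        intro f hf
        rw [Finset.mem_filter] at hf
        have hZ := hev f hf.2
        have h1 : (1:ℝ) ≤ Real.exp (-(ε * N)) * Real.exp (t * collZ f) := by
          rw [← Real.exp_add]
          apply Real.one_le_exp
          rw [htdef]
          nlinarith
        calc μ f = μ f * 1 := by ring
          _ ≤ μ f * (Real.exp (-(ε * N)) * Real.exp (t * collZ f)) :=
              mul_le_mul_of_nonneg_left h1 (hμ0 f)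
          _ = Real.exp (-(ε * N)) * (μ f * Real.exp (t * collZ f)) := by ring
    _ = Real.exp (-(ε * N)) * ∑ f ∈ Finset.univ.filter (fun f : Fin N → Fin B =>
        ((Finset.univ.image f).card : ℝ) < (1 - 2 * ε) * N ∨
          (1 + 2 * ε) * N < ((Finset.univ.image f).card : ℝ)),
          μ f * Real.exp (t * collZ f) := by rw [Finset.mul_sum]
    _ ≤ Real.exp (-(ε * N)) * ∑ f : Fin N → Fin B, μ f * Real.exp (t * collZ f) := by
        apply mul_le_mul_of_nonneg_left _ (le_of_lt (Real.exp_pos _))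
        apply Finset.sum_le_sum_of_subset_of_nonneg (Finset.filter_subset _ _)
        intro f _ _
        exact mul_nonneg (hμ0 f) (le_of_lt (Real.exp_pos _))
    _ ≤ Real.exp (-(ε * N)) * (1 + (Real.exp t - 1) * D * N) ^ N := by
        apply mul_le_mul_of_nonneg_left hmgf (le_of_lt (Real.exp_pos _))
    _ ≤ Real.exp (-(ε ^ 2 * N) / 2) := by
        have hx : 0 ≤ (Real.exp t - 1) * D * N := by
          have h1e : (1:ℝ) ≤ Real.exp t := Real.one_le_exp (by norm_num)
          exact mul_nonneg (mul_nonneg (by linarith) hD) (Nat.cast_nonneg N)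
        have hpow : (1 + (Real.exp t - 1) * D * N) ^ N
            ≤ Real.exp ((Real.exp t - 1) * D * N * N) := by
          calc (1 + (Real.exp t - 1) * D * N) ^ N
              ≤ (Real.exp ((Real.exp t - 1) * D * N)) ^ N := by
                apply pow_le_pow_left₀ (by linarith)
                linarith [Real.add_one_le_exp ((Real.exp t - 1) * D * N)]
            _ = Real.exp ((Real.exp t - 1) * D * N * N) := by
                rw [← Real.exp_nat_mul]; ring_nf
        calc Real.exp (-(ε * N)) * (1 + (Real.exp t - 1) * D * N) ^ N
            ≤ Real.exp (-(ε * N)) * Real.exp ((Real.exp t - 1) * D * N * N) :=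
              mul_le_mul_of_nonneg_left hpow (le_of_lt (Real.exp_pos _))
          _ = Real.exp (-(ε * N) + (Real.exp t - 1) * D * N * N) := by
              rw [← Real.exp_add]
          _ ≤ Real.exp (-(ε ^ 2 * N) / 2) := by
              apply Real.exp_le_exp.mpr
              have hexp : Real.exp t ≤ 1.65 := by
                have h1 : Real.exp t * Real.exp t = Real.exp 1 := by
                  rw [← Real.exp_add]; norm_num [htdef]
                have h2 : Real.exp 1 < 2.7182818286 := Real.exp_one_lt_d9
                nlinarith [Real.exp_pos t]
              have hND : D * N ≤ (1 + ε) * ε := by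
                rw [hDdef]
                rw [div_mul_eq_mul_div, div_le_iff₀ hB0]
                nlinarith
              have h3 : (Real.exp t - 1) * D * N ≤ 0.65 * ((1 + ε) * ε) := by
                have h4 : 0 ≤ D * (N:ℝ) := by positivity
                nlinarith
              nlinarith [mul_pos hε0 hN0]
end
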